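/- arXiv:2210.02780 — 3 statements merged into one kernel-verified Lean document; each statement's English description precedes it below -/
import Mathlib

section
/- Let H be a separable real Hilbert space, A : H → H a bounded symmetric positive invertible operator with A⁻¹ compact, and φ₀ : H → ℝ convex, continuous and coercive (φ₀(x) → ∞ as ‖x‖ → ∞). Define ψ(t,x) = inf_{y ∈ H} { φ₀(y) + ⟨A⁻¹(x−y), x−y⟩/(2t) } for t > 0. Then for every x ∈ H, ψ(t,x) → φ₀(x) as t → 0⁺. -/
open Filter Set
open scoped Topology RealInnerProductSpace

theorem exists_subgradient' {H : Type*} [NormedAddCommGroup H] [InnerProductSpace ℝ H]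
    [CompleteSpace H] (φ : H → ℝ) (hconv : ConvexOn ℝ Set.univ φ) (hcont : Continuous φ)
    (x : H) : ∃ v : H, ∀ y, φ x + ⟪v, y - x⟫ ≤ φ y := by
  set S : Set (H × ℝ) := {p : H × ℝ | p.1 ∈ (Set.univ : Set H) ∧ φ p.1 < p.2} with hS
  have hSconv : Convex ℝ S := hconv.convex_strict_epigraph
  have hSopen : IsOpen S := by
    have : S = {p : H × ℝ | φ p.1 < p.2} := by ext p; simp [hS]
    rw [this]
    exact isOpen_lt (hcont.comp continuous_fst) continuous_snd
  have hx : (x, φ x) ∉ S := by simp [hS]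
  obtain ⟨f, hf⟩ := geometric_hahn_banach_open_point hSconv hSopen hx
  set β : ℝ := -(f ((0 : H), (1 : ℝ))) with hβdef
  have hsplit : ∀ (y : H) (r : ℝ), f (y, r) = f (y, 0) - r * β := by
    intro y r
    have h : (y, r) = ((y, (0:ℝ)) + r • ((0:H), (1:ℝ)) : H × ℝ) := by
      simp [Prod.ext_iff]
    rw [h, map_add, map_smul]
    simp [hβdef]
  have hβ : 0 < β := by
    have h1 := hf (x, φ x + 1) (by simp [hS])
    rw [hsplit] at h1
    have h2 : f (x, φ x) = f (x, 0) - φ x * β := hsplit x (φ x)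
    nlinarith [h1, h2]
  have key : ∀ y : H, f (y, 0) - f (x, 0) + β * φ x ≤ β * φ y := by
    intro y
    by_contra h
    push_neg at h
    set r : ℝ := (f (y, 0) - f (x, 0) + β * φ x) / β with hr
    have hry : φ y < r := by
      rw [hr, lt_div_iff₀ hβ]; nlinarith [h]
    have hmem : (y, r) ∈ S := by simp [hS, hry]
    have h1 := hf (y, r) hmem
    rw [hsplit, hsplit] at h1
    have hrβ : r * β = f (y, 0) - f (x, 0) + β * φ x := by
      rw [hr]; field_simp
    have h2 := hsplit x (φ x)
    rw [h2] at h1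
    linarith [h1, hrβ]
  set ℓ : H →L[ℝ] ℝ := β⁻¹ • (f.comp (ContinuousLinearMap.inl ℝ H ℝ)) with hℓ
  refine ⟨(InnerProductSpace.toDual ℝ H).symm ℓ, fun y => ?_⟩
  have hv : ⟪(InnerProductSpace.toDual ℝ H).symm ℓ, y - x⟫ = ℓ (y - x) :=
    InnerProductSpace.toDual_symm_apply
  rw [hv]
  have hℓval : ℓ (y - x) = β⁻¹ * (f (y, 0) - f (x, 0)) := by
    have h0 : ((y - x : H), (0:ℝ)) = ((y, (0:ℝ)) - (x, (0:ℝ)) : H × ℝ) := by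
      simp [Prod.ext_iff]
    simp only [hℓ, ContinuousLinearMap.smul_apply, ContinuousLinearMap.coe_comp',
      Function.comp_apply, ContinuousLinearMap.inl_apply, smul_eq_mul]
    rw [h0, map_sub]
  rw [hℓval]
  have h2 : β⁻¹ * (f (y, 0) - f (x, 0)) ≤ φ y - φ x := by
    rw [inv_mul_le_iff₀ hβ]
    nlinarith [key y]
  linarith

theorem stmt_3 {H : Type*} [NormedAddCommGroup H] [InnerProductSpace ℝ H]
    [CompleteSpace H] [SecondCountableTopology H]
    (A B : H →L[ℝ] H)
    (hA_symm : ∀ x y : H, ⟪A x, y⟫ = ⟪x, A y⟫)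
    (hA_pos : ∀ x : H, x ≠ 0 → 0 < ⟪A x, x⟫)
    (hAB : ∀ x : H, A (B x) = x) (hBA : ∀ x : H, B (A x) = x)
    (hB_compact : IsCompactOperator B)
    (φ₀ : H → ℝ) (hconv : ConvexOn ℝ Set.univ φ₀) (hcont : Continuous φ₀)
    (hcoer : ∀ M : ℝ, ∃ R : ℝ, ∀ x : H, R ≤ ‖x‖ → M ≤ φ₀ x)
    (x : H) :
    Tendsto (fun t : ℝ => ⨅ y : H, (φ₀ y + ⟪B (x - y), x - y⟫ / (2 * t)))
      (𝓝[>] (0:ℝ)) (𝓝 (φ₀ x)) := by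
  -- basic facts
  have hApos' : ∀ u : H, 0 ≤ ⟪A u, u⟫ := by
    intro u
    rcases eq_or_ne u 0 with h | h
    · simp [h]
    · exact (hA_pos u h).le
  have hBsymm : ∀ u w : H, ⟪B u, w⟫ = ⟪u, B w⟫ := by
    intro u w
    calc ⟪B u, w⟫ = ⟪B u, A (B w)⟫ := by rw [hAB]
      _ = ⟪A (B u), B w⟫ := (hA_symm (B u) (B w)).symm
      _ = ⟪u, B w⟫ := by rw [hAB]
  have hBpos : ∀ u : H, 0 ≤ ⟪B u, u⟫ := by
    intro u
    have h := hApos' (B u)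
    rw [hAB, real_inner_comm] at h
    exact h
  obtain ⟨ℓ, hℓ⟩ := exists_subgradient' φ₀ hconv hcont x
  set c : ℝ := ⟪A ℓ, ℓ⟫ with hcdef
  have hc : 0 ≤ c := hApos' ℓ
  -- key pointwise lower bound
  have hlow : ∀ t : ℝ, 0 < t → ∀ y : H,
      φ₀ x - c * t / 2 ≤ φ₀ y + ⟪B (x - y), x - y⟫ / (2 * t) := by
    intro t ht y
    set u : H := x - y with hu
    have e1 : B (u - t • A ℓ) = B u - t • ℓ := by rw [map_sub, map_smul, hBA]
    have e3 : ⟪B u, A ℓ⟫ = ⟪ℓ, u⟫ := by rw [hBsymm, hBA, real_inner_comm]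
    have e4 : ⟪ℓ, A ℓ⟫ = c := (hA_symm ℓ ℓ).symm
    have hq0 := hBpos (u - t • A ℓ)
    rw [e1] at hq0
    have e2 : ⟪B u - t • ℓ, u - t • A ℓ⟫
        = ⟪B u, u⟫ - t * ⟪B u, A ℓ⟫ - t * ⟪ℓ, u⟫ + t * t * ⟪ℓ, A ℓ⟫ := by
      simp only [inner_sub_left, inner_sub_right, real_inner_smul_left, real_inner_smul_right]
      ring
    rw [e2, e3, e4] at hq0
    -- hq0 : 0 ≤ ⟪B u, u⟫ - t * ⟪ℓ, u⟫ - t * ⟪ℓ, u⟫ + t * t * c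
    have hsub := hℓ y
    have hyx : ⟪ℓ, y - x⟫ = -⟪ℓ, u⟫ := by
      rw [hu, ← inner_neg_right, neg_sub]
    rw [hyx] at hsub
    have h2t : (0:ℝ) < 2 * t := by linarith
    have hdiv : ⟪ℓ, u⟫ - c * t / 2 ≤ ⟪B u, u⟫ / (2 * t) := by
      rw [le_div_iff₀ h2t]
      nlinarith [hq0]
    linarith
  -- upper bound
  have hupper : ∀ t : ℝ, 0 < t →
      (⨅ y : H, (φ₀ y + ⟪B (x - y), x - y⟫ / (2 * t))) ≤ φ₀ x := by
    intro t ht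
    have hbdd : BddBelow (Set.range fun y : H => φ₀ y + ⟪B (x - y), x - y⟫ / (2 * t)) := by
      refine ⟨φ₀ x - c * t / 2, ?_⟩
      rintro r ⟨y, rfl⟩
      exact hlow t ht y
    have h := ciInf_le hbdd x
    simpa using h
  have hlower : ∀ t : ℝ, 0 < t →
      φ₀ x - c * t / 2 ≤ (⨅ y : H, (φ₀ y + ⟪B (x - y), x - y⟫ / (2 * t))) :=
    fun t ht => le_ciInf (hlow t ht)
  -- squeeze
  have hg : Tendsto (fun t : ℝ => φ₀ x - c * t / 2) (𝓝[>] (0:ℝ)) (𝓝 (φ₀ x)) := by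
    have h1 : Tendsto (fun t : ℝ => φ₀ x - c * t / 2) (𝓝 (0:ℝ)) (𝓝 (φ₀ x - c * 0 / 2)) := by
      exact (continuous_const.sub ((continuous_const.mul continuous_id).div_const 2)).tendsto 0
    simp only [mul_zero, zero_div, sub_zero] at h1
    exact h1.mono_left nhdsWithin_le_nhds
  refine tendsto_of_tendsto_of_tendsto_of_le_of_le' hg tendsto_const_nhds ?_ ?_
  · exact eventually_nhdsWithin_of_forall (fun t ht => hlower t ht)
  · exact eventually_nhdsWithin_of_forall (fun t ht => hupper t ht)
end

section
/- Let α > 2β > 1, let H = ℓ², λ_n = (n+1)^α, and x*_n = (n+1)^{−β}, and set φ₀(x) = ⟨x, x*⟩². Then for every x ∈ H, inf_{y∈H} { φ₀(y) + (1/(2t)) ∑_n λ_n⁻¹ (x_n − y_n)² } → 0 as t → 0⁺. In particular, the Lax–Oleinik value does not converge to φ₀(x) whenever ⟨x,x*⟩ ≠ 0. -/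
/-!
For every `t > 0` the infimum is already `0`: the weight `xₙ* = (n+1)^(-β)` lies in `ℓ²`
(as `2β > 1`), and changing only the `N`-th coordinate of `x` by `-⟨x, x*⟩ / x*_N` makes
`⟨y, x*⟩ = 0` at the price `(1/2t) ⟨x, x*⟩² (N+1)^(2β-α)`, which tends to `0` as `N → ∞`
because `α > 2β`. Hence the Lax–Oleinik value tends to `0`, and cannot tend to
`⟨x, x*⟩² ≠ 0`.
-/
open Filter Set
open scoped Topology

local notation "ℓ²" => lp (fun _ : ℕ => ℝ) 2

lemma memℓp_two_natCast_add_one_rpow_neg {β : ℝ} (hβ : 1 < 2 * β) :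
    Memℓp (fun n : ℕ => ((n : ℝ) + 1) ^ (-β)) 2 := by
  refine memℓp_gen ?_
  refine ((Real.summable_one_div_nat_add_rpow 1 (2 * β)).2 hβ).congr fun n => ?_
  have hn : (0 : ℝ) < n + 1 := by positivity
  rw [abs_of_pos hn, Real.norm_of_nonneg (by positivity), ENNReal.toReal_ofNat,
    ← Real.rpow_mul hn.le, one_div, ← Real.rpow_neg hn.le]
  ring_nf

lemma summable_mul_of_memℓp_two (x : ℓ²) {w : ℕ → ℝ} (hw : Memℓp w 2) :
    Summable fun n => x n * w n := by
  refine (lp.summable_inner x ⟨w, hw⟩).congr fun n => ?_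
  rw [RCLike.inner_apply', conj_trivial]

section Perturbation

variable (x : ℓ²) (N : ℕ) (a : ℝ)

lemma tsum_add_single_mul {w : ℕ → ℝ} (hxw : Summable fun n => x n * w n) :
    ∑' n, (x + lp.single 2 N a : ℓ²) n * w n = ∑' n, x n * w n + a * w N := by
  have hsingle : HasSum (fun n => (Pi.single N a : ℕ → ℝ) n * w n) (a * w N) := by
    convert hasSum_ite_eq N (a * w N) using 1
    ext n
    by_cases h : n = N <;> simp [h]
  simpa [add_mul] using (hxw.hasSum.add hsingle).tsum_eq

lemma tsum_mul_sub_add_single_sq (μ : ℕ → ℝ) :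
    ∑' n, μ n * (x n - (x + lp.single 2 N a : ℓ²) n) ^ 2 = μ N * a ^ 2 := by
  rw [tsum_eq_single N fun n hn => by simp [hn]]
  simp

end Perturbation

theorem iInf_sq_tsum_mul_add_mul_tsum_eq_zero (x : ℓ²) {w μ : ℕ → ℝ}
    {s : ℝ} (hxw : Summable fun n => x n * w n) (hw : ∀ n, w n ≠ 0) (hμ : ∀ n, 0 ≤ μ n)
    (hs : 0 ≤ s) (hlim : Tendsto (fun n => μ n / w n ^ 2) atTop (𝓝 0)) :
    ⨅ y : ℓ², ((∑' n, y n * w n) ^ 2 + s * ∑' n, μ n * (x n - y n) ^ 2) = 0 := by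
  set F : ℓ² → ℝ := fun y => (∑' n, y n * w n) ^ 2 + s * ∑' n, μ n * (x n - y n) ^ 2
  have hF_nonneg : ∀ y, 0 ≤ F y := fun y =>
    add_nonneg (sq_nonneg _) <|
      mul_nonneg hs <| tsum_nonneg fun n => mul_nonneg (hμ n) (sq_nonneg _)
  set c := ∑' n, x n * w n
  have hF_test : ∀ N, F (x + lp.single 2 N (-c / w N)) = s * c ^ 2 * (μ N / w N ^ 2) := by
    intro N
    simp only [F, tsum_add_single_mul x N _ hxw, tsum_mul_sub_add_single_sq]
    field_simp [hw N]
    ring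
  have hF_test_tendsto : Tendsto (fun N => F (x + lp.single 2 N (-c / w N))) atTop (𝓝 0) := by
    simpa [hF_test] using hlim.const_mul (s * c ^ 2)
  have hF_bdd : BddBelow (range F) := ⟨0, by rintro _ ⟨y, rfl⟩; exact hF_nonneg y⟩
  exact le_antisymm (ge_of_tendsto' hF_test_tendsto fun N => ciInf_le hF_bdd _)
    (le_ciInf hF_nonneg)

lemma tendsto_rpow_inv_div_rpow_neg_sq {α β : ℝ} (hαβ : 2 * β < α) :
    Tendsto (fun n : ℕ => (((n : ℝ) + 1) ^ α)⁻¹ / (((n : ℝ) + 1) ^ (-β)) ^ 2) atTop (𝓝 0) := by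
  have hbase : Tendsto (fun n : ℕ => (n : ℝ) + 1) atTop atTop :=
    tendsto_atTop_add_const_right atTop 1 tendsto_natCast_atTop_atTop
  refine ((tendsto_rpow_neg_atTop (by linarith : 0 < α - 2 * β)).comp hbase).congr fun n => ?_
  have hn : (0 : ℝ) < n + 1 := by positivity
  rw [Function.comp_apply, ← Real.rpow_natCast, ← Real.rpow_mul hn.le, ← Real.rpow_neg hn.le,
    div_eq_mul_inv, ← Real.rpow_neg hn.le, ← Real.rpow_add hn]
  congr 1
  push_cast
  ring

theorem stmt_8 (α β : ℝ) (hβ : 1 < 2 * β) (hαβ : 2 * β < α) :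
    (∀ x : lp (fun _ : ℕ => ℝ) 2,
      Tendsto (fun t : ℝ =>
          ⨅ y : lp (fun _ : ℕ => ℝ) 2,
            ((∑' n : ℕ, y n * ((n : ℝ) + 1) ^ (-β)) ^ 2 +
              (1 / (2 * t)) * ∑' n : ℕ, (((n : ℝ) + 1) ^ α)⁻¹ * (x n - y n) ^ 2))
        (𝓝[>] (0:ℝ)) (𝓝 0)) ∧
    ∀ x : lp (fun _ : ℕ => ℝ) 2, (∑' n : ℕ, x n * ((n : ℝ) + 1) ^ (-β)) ≠ 0 →
      ¬ Tendsto (fun t : ℝ =>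
          ⨅ y : lp (fun _ : ℕ => ℝ) 2,
            ((∑' n : ℕ, y n * ((n : ℝ) + 1) ^ (-β)) ^ 2 +
              (1 / (2 * t)) * ∑' n : ℕ, (((n : ℝ) + 1) ^ α)⁻¹ * (x n - y n) ^ 2))
        (𝓝[>] (0:ℝ)) (𝓝 ((∑' n : ℕ, x n * ((n : ℝ) + 1) ^ (-β)) ^ 2)) := by
  have hvalue_eq_zero : ∀ (x : ℓ²) (t : ℝ), 0 < t →
      ⨅ y : ℓ², ((∑' n : ℕ, y n * ((n : ℝ) + 1) ^ (-β)) ^ 2 +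
        (1 / (2 * t)) * ∑' n : ℕ, (((n : ℝ) + 1) ^ α)⁻¹ * (x n - y n) ^ 2) = 0 := fun x t ht =>
    iInf_sq_tsum_mul_add_mul_tsum_eq_zero x
      (summable_mul_of_memℓp_two x (memℓp_two_natCast_add_one_rpow_neg hβ))
      (fun n => (Real.rpow_pos_of_pos (by positivity) _).ne') (fun n => by positivity)
      (by positivity) (tendsto_rpow_inv_div_rpow_neg_sq hαβ)
  have hlim : ∀ x : ℓ², Tendsto (fun t : ℝ =>
      ⨅ y : ℓ², ((∑' n : ℕ, y n * ((n : ℝ) + 1) ^ (-β)) ^ 2 +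
        (1 / (2 * t)) * ∑' n : ℕ, (((n : ℝ) + 1) ^ α)⁻¹ * (x n - y n) ^ 2)) (𝓝[>] 0) (𝓝 0) :=
    fun x => tendsto_const_nhds.congr' <|
      eventually_nhdsWithin_of_forall fun t ht => (hvalue_eq_zero x t ht).symm
  refine ⟨hlim, fun x hx h => hx ?_⟩
  exact pow_eq_zero_iff two_ne_zero |>.1 (tendsto_nhds_unique h (hlim x))
end

section
/- Let H be an infinite-dimensional separable Hilbert space with orthonormal basis (e_n), A⁻¹ a compact positive operator, and define φ₀(x) = ‖x‖² if ‖x‖ ≥ 1 and φ₀(x) = 2 − ‖x‖² otherwise. Then for every t > 0, ψ(t,0) = inf_y { φ₀(y) + ⟨A⁻¹y,y⟩/(2t) } = 1, while φ₀(0) = 2; hence ψ(t,0) does not converge to φ₀(0) as t → 0⁺. -/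
/-!
The lower bound `ψ(t,0) ≥ 1` holds because `φ₀ ≥ 1` and `A⁻¹ ≥ 0`. For the upper bound, the
orthonormal sequence `eₙ` tends weakly to `0`, so the compact operator `A⁻¹` maps it to a norm-null
sequence; hence `⟪A⁻¹eₙ, eₙ⟫ → 0` and `φ₀(eₙ) + ⟪A⁻¹eₙ, eₙ⟫/(2t) → 1`. So `ψ(·,0) ≡ 1` on
`t > 0`, which cannot tend to `φ₀(0) = 2`.
-/

open Filter
open scoped Topology InnerProductSpace RealInnerProductSpace

section

variable {𝕜 E F : Type*} [RCLike 𝕜]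
  [NormedAddCommGroup E] [InnerProductSpace 𝕜 E]
  [NormedAddCommGroup F] [InnerProductSpace 𝕜 F]

theorem Orthonormal.tendsto_inner_atTop_zero {v : ℕ → E} (hv : Orthonormal 𝕜 v) (x : E) :
    Tendsto (fun n => ⟪v n, x⟫_𝕜) atTop (𝓝 0) := by
  have hsq : Tendsto (fun n => ‖⟪v n, x⟫_𝕜‖ ^ 2) atTop (𝓝 0) :=
    (hv.inner_products_summable x).tendsto_atTop_zero
  rw [tendsto_zero_iff_norm_tendsto_zero]
  simpa using hsq.sqrt

theorem IsCompactOperator.tendsto_zero_of_weakly_tendsto_zero [CompleteSpace E] [CompleteSpace F]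
    {T : E →L[𝕜] F} (hT : IsCompactOperator T) {x : ℕ → E} {R : ℝ} (hR : ∀ n, ‖x n‖ ≤ R)
    (hx : ∀ y, Tendsto (fun n => ⟪x n, y⟫_𝕜) atTop (𝓝 0)) :
    Tendsto (fun n => T (x n)) atTop (𝓝 0) := by
  obtain ⟨K, hK, hTK⟩ := hT.image_closedBall_subset_compact (f := (T : E →ₗ[𝕜] F)) R
  have hmem : ∀ n, T (x n) ∈ K := fun n =>
    hTK ⟨x n, mem_closedBall_zero_iff.mpr (hR n), rfl⟩
  refine tendsto_of_subseq_tendsto fun ns hns => ?_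
  obtain ⟨z, -, ms, hms, hz⟩ := hK.tendsto_subseq fun n => hmem (ns n)
  suffices z = 0 from ⟨ms, this ▸ hz⟩
  refine inner_self_eq_zero.mp (tendsto_nhds_unique (hz.inner (𝕜 := 𝕜) tendsto_const_nhds) ?_)
  have hTx : Tendsto (fun n => ⟪T (x n), z⟫_𝕜) atTop (𝓝 0) := by
    simpa only [ContinuousLinearMap.adjoint_inner_right] using
      hx (ContinuousLinearMap.adjoint T z)
  exact hTx.comp (hns.comp hms.tendsto_atTop)

theorem IsCompactOperator.tendsto_apply_orthonormal_zero [CompleteSpace E] [CompleteSpace F]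
    {T : E →L[𝕜] F} (hT : IsCompactOperator T) {v : ℕ → E} (hv : Orthonormal 𝕜 v) :
    Tendsto (fun n => T (v n)) atTop (𝓝 0) :=
  hT.tendsto_zero_of_weakly_tendsto_zero (fun n => (hv.1 n).le) hv.tendsto_inner_atTop_zero

end

theorem one_le_ite_sq {r : ℝ} (hr : 0 ≤ r) : 1 ≤ if 1 ≤ r then r ^ 2 else 2 - r ^ 2 := by
  split_ifs with h <;> nlinarith

theorem iInf_ite_norm_sq_add_inner_div_eq_one {H : Type*} [NormedAddCommGroup H]
    [InnerProductSpace ℝ H] [CompleteSpace H] {B : H →L[ℝ] H} (hB : IsCompactOperator B)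
    (hB_pos : ∀ x, 0 ≤ ⟪B x, x⟫) {v : ℕ → H} (hv : Orthonormal ℝ v) {t : ℝ} (ht : 0 < t) :
    ⨅ y : H, ((if 1 ≤ ‖y‖ then ‖y‖ ^ 2 else 2 - ‖y‖ ^ 2) + ⟪B y, y⟫ / (2 * t)) = 1 := by
  refine ciInf_eq_of_forall_ge_of_forall_gt_exists_lt (fun y => ?_) fun w hw => ?_
  · have hφ := one_le_ite_sq (norm_nonneg y)
    have hquad := div_nonneg (hB_pos y) (by positivity : 0 ≤ 2 * t)
    linarith
  · have hquad : Tendsto (fun n => ⟪B (v n), v n⟫) atTop (𝓝 0) :=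
      squeeze_zero_norm
        (fun n => by simpa [hv.1 n] using norm_inner_le_norm (𝕜 := ℝ) (B (v n)) (v n))
        (tendsto_zero_iff_norm_tendsto_zero.mp (hB.tendsto_apply_orthonormal_zero hv))
    have hval : Tendsto (fun n => (if 1 ≤ ‖v n‖ then ‖v n‖ ^ 2 else 2 - ‖v n‖ ^ 2)
        + ⟪B (v n), v n⟫ / (2 * t)) atTop (𝓝 1) := by
      simpa [hv.1 _] using (hquad.div_const (2 * t)).const_add 1
    obtain ⟨n, hn⟩ := (hval.eventually (gt_mem_nhds hw)).exists
    exact ⟨v n, hn⟩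

theorem stmt_9_general {H : Type*} [NormedAddCommGroup H] [InnerProductSpace ℝ H]
    [CompleteSpace H]
    (e : HilbertBasis ℕ ℝ H) (B : H →L[ℝ] H)
    (hB_compact : IsCompactOperator B)
    (hB_pos : ∀ x : H, 0 ≤ ⟪B x, x⟫) :
    (∀ t : ℝ, 0 < t →
      (⨅ y : H, ((if 1 ≤ ‖y‖ then ‖y‖ ^ 2 else 2 - ‖y‖ ^ 2) + ⟪B y, y⟫ / (2 * t))) = 1) ∧
    ((if (1 : ℝ) ≤ ‖(0 : H)‖ then ‖(0 : H)‖ ^ 2 else 2 - ‖(0 : H)‖ ^ 2) = 2) ∧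
    ¬ Tendsto
        (fun t : ℝ =>
          ⨅ y : H, ((if 1 ≤ ‖y‖ then ‖y‖ ^ 2 else 2 - ‖y‖ ^ 2) + ⟪B y, y⟫ / (2 * t)))
        (𝓝[>] (0:ℝ)) (𝓝 2) := by
  have hψ := fun t (ht : 0 < t) =>
    iInf_ite_norm_sq_add_inner_div_eq_one hB_compact hB_pos e.orthonormal ht
  refine ⟨hψ, by norm_num, fun h => ?_⟩
  have h₁ : Tendsto (fun _ => (1 : ℝ)) (𝓝[>] (0 : ℝ)) (𝓝 2) :=
    h.congr' (eventually_nhdsWithin_of_forall hψ)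
  exact absurd (tendsto_const_nhds_iff.mp h₁) (by norm_num)

theorem stmt_9 {H : Type*} [NormedAddCommGroup H] [InnerProductSpace ℝ H]
    [CompleteSpace H]
    (e : HilbertBasis ℕ ℝ H) (B : H →L[ℝ] H)
    (hB_compact : IsCompactOperator B)
    (hB_symm : ∀ x y : H, ⟪B x, y⟫ = ⟪x, B y⟫)
    (hB_pos : ∀ x : H, 0 ≤ ⟪B x, x⟫) :
    (∀ t : ℝ, 0 < t →
      (⨅ y : H, ((if 1 ≤ ‖y‖ then ‖y‖ ^ 2 else 2 - ‖y‖ ^ 2) + ⟪B y, y⟫ / (2 * t))) = 1) ∧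
    ((if (1 : ℝ) ≤ ‖(0 : H)‖ then ‖(0 : H)‖ ^ 2 else 2 - ‖(0 : H)‖ ^ 2) = 2) ∧
    ¬ Tendsto
        (fun t : ℝ =>
          ⨅ y : H, ((if 1 ≤ ‖y‖ then ‖y‖ ^ 2 else 2 - ‖y‖ ^ 2) + ⟪B y, y⟫ / (2 * t)))
        (𝓝[>] (0:ℝ)) (𝓝 2) :=
  stmt_9_general e B hB_compact hB_pos
end
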